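/- Let Γ be a finite group of order p, D a finite digraph with vertex set V, α : A(D) → Γ a voltage assignment, and W a weighted matrix of D (entries w(u,v) for arcs (u,v), zero otherwise). Define, for h ∈ Γ, the matrix W_h with (u,v)-entry w(u,v) if (u,v) ∈ A(D) and α(u,v) = h, and 0 otherwise. Let W(D^α) be the matrix indexed by V × Γ with ((u,g),(v,k))-entry w(u,v) if (u,v) ∈ A(D) and k = g·α(u,v), and 0 otherwise. Then det(W(D^α)) = ∏_{j=1}^{k} det(∑_{h∈Γ} ρ_j(h) ⊗ W_h)^{d_j}, where ρ₁,…,ρ_k are the inequivalent irreducible complex representations of Γ and d_j = deg ρ_j. -/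

import Mathlib

/-!
Order the vertices of the covering as `Γ × V`. Then `W(D^α) = ∑_h R(h) ⊗ W_h`, where `R(h)` is
the permutation matrix of right multiplication by `h`. The matrix of matrix coefficients,
`M g (j, a, b) = ρ_j(g)_{ab}`, satisfies `R(h) M = M B(h)` with `B(h) = ⊕_j 1_{d_j} ⊗ ρ_j(h)`,
and Schur's orthogonality relations give it a left inverse; `∑ d_j² = |Γ|` makes it square.
So `W(D^α)` is similar to `∑_h B(h) ⊗ W_h`, which after reordering the indices is block
diagonal with `j`-th block `1_{d_j} ⊗ ∑_h ρ_j(h) ⊗ W_h`, of determinant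
`det (∑_h ρ_j(h) ⊗ W_h) ^ d_j`.
-/

open Kronecker Matrix

namespace Matrix

theorem mul_single_one_mul_apply {R l m n o : Type*} [Semiring R] [Fintype m] [Fintype n]
    [DecidableEq m] [DecidableEq n] (A : Matrix l m R) (B : Matrix n o R) (a : l) (b : m) (c : n)
    (d : o) : (A * single b c (1 : R) * B) a d = A a b * B c d := by
  simp [mul_apply, single, ite_and, mul_ite, ite_mul]

theorem exists_eq_smul_one_of_forall_mul_comm {K G n : Type*} [Field K] [IsAlgClosed K]
    [Fintype n] [DecidableEq n] (ρ : G → Matrix n n K)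
    (hirr : ∀ U : Submodule K (n → K), (∀ g, ∀ v ∈ U, ρ g *ᵥ v ∈ U) → U = ⊥ ∨ U = ⊤)
    {T : Matrix n n K} (hT : ∀ g, ρ g * T = T * ρ g) : ∃ c : K, T = c • 1 := by
  cases isEmpty_or_nonempty n
  · exact ⟨0, Subsingleton.elim _ _⟩
  obtain ⟨c, hc⟩ := Module.End.exists_eigenvalue (toLin' T)
  refine ⟨c, sub_eq_zero.mp (toLin'.injective ?_)⟩
  have hker : LinearMap.ker (toLin' (T - c • 1)) = Module.End.eigenspace (toLin' T) c := by
    rw [Module.End.eigenspace_def, map_sub, map_smul, toLin'_one, Module.End.one_eq_id]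
  have hinv : ∀ g, ∀ v ∈ LinearMap.ker (toLin' (T - c • 1)),
      ρ g *ᵥ v ∈ LinearMap.ker (toLin' (T - c • 1)) := by
    intro g v hv
    simp only [LinearMap.mem_ker, toLin'_apply] at hv ⊢
    have hcomm : (T - c • 1) * ρ g = ρ g * (T - c • 1) := by
      rw [sub_mul, mul_sub, hT, smul_mul_assoc, mul_smul_comm, one_mul, mul_one]
    rw [mulVec_mulVec, hcomm, ← mulVec_mulVec, hv, mulVec_zero]
  have htop := (hirr _ hinv).resolve_left (hker ▸ Module.End.hasEigenvalue_iff.mp hc)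
  rw [LinearMap.ker_eq_top.mp htop, map_zero]

variable {R : Type*} [CommRing R]

theorem det_blockDiagonal' {ι : Type*} [Fintype ι] [DecidableEq ι] {m : ι → Type*}
    [∀ i, Fintype (m i)] [∀ i, DecidableEq (m i)] (M : ∀ i, Matrix (m i) (m i) R) :
    (blockDiagonal' M).det = ∏ i, (M i).det := by
  let _ : LinearOrder ι := LinearOrder.lift' (Fintype.equivFin ι) (Fintype.equivFin ι).injective
  rw [(blockTriangular_blockDiagonal' M).det_fintype]
  refine Finset.prod_congr rfl fun i _ => ?_
  rw [← det_reindex_self (Equiv.sigmaSubtype i)]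
  congr 1
  ext x y
  simp [toSquareBlock, toSquareBlockProp, Equiv.sigmaSubtype, blockDiagonal'_apply_eq]

theorem det_eq_det_of_mul_eq_mul {m n : Type*} [Fintype m] [Fintype n] [DecidableEq m]
    [DecidableEq n] (e : m ≃ n) {X : Matrix m m R} {Y : Matrix n n R} {P : Matrix m n R}
    {Q : Matrix n m R} (hQP : Q * P = 1) (h : X * P = P * Y) : X.det = Y.det := by
  have hY : Y = Q * X * P := by
    rw [Matrix.mul_assoc, h, ← Matrix.mul_assoc, hQP, Matrix.one_mul]
  have hQP' : Q.submatrix e id * P.submatrix id e = 1 := by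
    simpa [hQP] using submatrix_mul_equiv Q P e (Equiv.refl m) e
  have hY' : Y.submatrix e e = Q.submatrix e id * X * P.submatrix id e := by
    rw [hY, Matrix.mul_assoc, ← submatrix_mul_equiv Q (X * P) e (Equiv.refl m) e,
      ← submatrix_mul_equiv X P (Equiv.refl m) (Equiv.refl m) e]
    simp [Matrix.mul_assoc]
  rw [← det_submatrix_equiv_self e Y, hY', det_mul, det_mul, mul_right_comm, ← det_mul, hQP',
    det_one, one_mul]

variable {ι V : Type*} [Fintype ι] [Fintype V] [DecidableEq V]

theorem det_sum_kronecker_eq_of_mul_eq_mul {m n : Type*} [Fintype m] [Fintype n]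
    [DecidableEq m] [DecidableEq n] (e : m ≃ n) {A : ι → Matrix m m R} {B : ι → Matrix n n R}
    (W : ι → Matrix V V R) {P : Matrix m n R} {Q : Matrix n m R} (hQP : Q * P = 1)
    (h : ∀ i, A i * P = P * B i) :
    (∑ i, A i ⊗ₖ W i).det = (∑ i, B i ⊗ₖ W i).det :=
  det_eq_det_of_mul_eq_mul (e.prodCongr (Equiv.refl V)) (P := P ⊗ₖ 1) (Q := Q ⊗ₖ 1)
    (by rw [← mul_kronecker_mul, hQP, Matrix.one_mul, one_kronecker_one])
    (by
      rw [Matrix.sum_mul, Matrix.mul_sum]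
      simp only [← mul_kronecker_mul, h, Matrix.one_mul, Matrix.mul_one])

theorem det_sum_blockDiagonal'_kronecker {κ : Type*} [Fintype κ] [DecidableEq κ]
    {m : κ → Type*} [∀ j, Fintype (m j)] [∀ j, DecidableEq (m j)]
    (B : ι → ∀ j, Matrix (m j) (m j) R) (W : ι → Matrix V V R) :
    (∑ i, blockDiagonal' (B i) ⊗ₖ W i).det = ∏ j, (∑ i, B i j ⊗ₖ W i).det := by
  have hblock : ∑ i, blockDiagonal' (B i) ⊗ₖ W i
      = (blockDiagonal' fun j => ∑ i, B i j ⊗ₖ W i).submatrix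
          (Equiv.sigmaProdDistrib m V) (Equiv.sigmaProdDistrib m V) := by
    ext ⟨⟨j, a⟩, u⟩ ⟨⟨j', a'⟩, u'⟩
    by_cases hj : j = j'
    · subst hj
      simp [Matrix.sum_apply, blockDiagonal'_apply_eq, Equiv.sigmaProdDistrib]
    · simp [Matrix.sum_apply, blockDiagonal'_apply_ne _ _ _ hj, Equiv.sigmaProdDistrib]
  rw [hblock, det_submatrix_equiv_self, det_blockDiagonal']

theorem det_sum_one_kronecker_kronecker {n : Type*} [Fintype n] [DecidableEq n]
    (B : ι → Matrix n n R) (W : ι → Matrix V V R) :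
    (∑ i, (1 : Matrix n n R) ⊗ₖ B i ⊗ₖ W i).det = (∑ i, B i ⊗ₖ W i).det ^ Fintype.card n := by
  have hassoc : ∑ i, (1 : Matrix n n R) ⊗ₖ B i ⊗ₖ W i
      = ((1 : Matrix n n R) ⊗ₖ ∑ i, B i ⊗ₖ W i).submatrix (Equiv.prodAssoc n n V)
          (Equiv.prodAssoc n n V) := by
    ext ⟨⟨a, b⟩, u⟩ ⟨⟨a', b'⟩, u'⟩
    by_cases ha : a = a' <;> simp [Matrix.sum_apply, ha]
  rw [hassoc, det_submatrix_equiv_self, det_kronecker, det_one, one_pow, one_mul]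

end Matrix

section Orthogonality

variable {Γ : Type*} [Group Γ] [Fintype Γ]

theorem sum_mul_mul_inv_intertwines {R m n : Type*} [Semiring R] [Fintype m] [Fintype n]
    [DecidableEq m] [DecidableEq n] (ρ : Γ →* Matrix m m R) (σ : Γ →* Matrix n n R)
    (X : Matrix m n R) (g : Γ) :
    ρ g * ∑ h, ρ h * X * σ h⁻¹ = (∑ h, ρ h * X * σ h⁻¹) * σ g := by
  rw [Matrix.mul_sum, Matrix.sum_mul]
  refine Fintype.sum_equiv (Equiv.mulLeft g) _ _ fun h => ?_
  simp only [Equiv.coe_mulLeft, _root_.mul_inv_rev, map_mul, Matrix.mul_assoc, ← map_mul σ g⁻¹ g,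
    inv_mul_cancel, map_one, Matrix.mul_one]

variable {K : Type*} [Field K]

theorem sum_mul_mul_inv_eq_zero {m n : Type*} [Fintype m] [Fintype n]
    [DecidableEq m] [DecidableEq n] (ρ : Γ →* Matrix m m K) (σ : Γ →* Matrix n n K)
    (hρσ : ∀ T : Matrix m n K, (∀ g, ρ g * T = T * σ g) → T = 0) (X : Matrix m n K) :
    ∑ h, ρ h * X * σ h⁻¹ = 0 :=
  hρσ _ (sum_mul_mul_inv_intertwines ρ σ X)

theorem sum_mul_mul_inv_eq_trace_smul [IsAlgClosed K] [CharZero K] {n : Type*} [Fintype n]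
    [DecidableEq n] [Nonempty n] (ρ : Γ →* Matrix n n K)
    (hirr : ∀ U : Submodule K (n → K), (∀ g, ∀ v ∈ U, ρ g *ᵥ v ∈ U) → U = ⊥ ∨ U = ⊤)
    (X : Matrix n n K) :
    ∑ h, ρ h * X * ρ h⁻¹ = ((Fintype.card Γ : K) / Fintype.card n * X.trace) • 1 := by
  obtain ⟨c, hc⟩ := exists_eq_smul_one_of_forall_mul_comm ρ hirr
    (sum_mul_mul_inv_intertwines ρ ρ X)
  have htrace : (Fintype.card Γ : K) * X.trace = c * Fintype.card n := by
    have := congrArg trace hc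
    simp only [trace_sum, trace_mul_cycle _ X, ← map_mul, inv_mul_cancel, map_one,
      Matrix.one_mul] at this
    simpa [trace_smul, trace_one, mul_comm] using this
  rw [hc]
  congr 1
  have : (Fintype.card n : K) ≠ 0 := Nat.cast_ne_zero.mpr Fintype.card_ne_zero
  field_simp
  exact htrace.symm

end Orthogonality

section Coefficients

variable {Γ : Type*} [Group Γ] [Fintype Γ] {ι : Type*} [DecidableEq ι]
  {n : ι → Type*} [∀ j, Fintype (n j)] [∀ j, DecidableEq (n j)]

def repCoeffMatrix {R : Type*} [Semiring R] (ρ : ∀ j, Γ →* Matrix (n j) (n j) R) :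
    Matrix Γ (Σ j, n j × n j) R :=
  of fun g x => ρ x.1 g x.2.1 x.2.2

def repCoeffMatrixInv {K : Type*} [Field K] (ρ : ∀ j, Γ →* Matrix (n j) (n j) K) :
    Matrix (Σ j, n j × n j) Γ K :=
  of fun x g => (Fintype.card (n x.1) : K) / Fintype.card Γ * ρ x.1 g⁻¹ x.2.2 x.2.1

def repBlockMatrix {R : Type*} [Semiring R] (ρ : ∀ j, Γ →* Matrix (n j) (n j) R) (h : Γ) :
    Matrix (Σ j, n j × n j) (Σ j, n j × n j) R :=
  blockDiagonal' fun j => (1 : Matrix (n j) (n j) R) ⊗ₖ ρ j h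

theorem repCoeffMatrixInv_mul_repCoeffMatrix {K : Type*} [Field K] [IsAlgClosed K] [CharZero K]
    (ρ : ∀ j, Γ →* Matrix (n j) (n j) K)
    (hirr : ∀ j, ∀ U : Submodule K (n j → K), (∀ g, ∀ v ∈ U, ρ j g *ᵥ v ∈ U) → U = ⊥ ∨ U = ⊤)
    (hinequiv : ∀ i j, i ≠ j →
      ∀ T : Matrix (n i) (n j) K, (∀ g, ρ i g * T = T * ρ j g) → T = 0) :
    repCoeffMatrixInv ρ * repCoeffMatrix ρ = 1 := by
  ext ⟨i, a, b⟩ ⟨j, a', b'⟩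
  have hsum : (repCoeffMatrixInv ρ * repCoeffMatrix ρ) ⟨i, a, b⟩ ⟨j, a', b'⟩
      = Fintype.card (n i) / Fintype.card Γ
          * (∑ h, ρ j h * single b' b (1 : K) * ρ i h⁻¹) a' a := by
    rw [mul_apply, Matrix.sum_apply, Finset.mul_sum]
    simp only [repCoeffMatrix, repCoeffMatrixInv, of_apply, mul_single_one_mul_apply]
    exact Finset.sum_congr rfl fun h _ => by ring
  rw [hsum]
  by_cases hij : j = i
  · subst hij
    have : Nonempty (n j) := ⟨a⟩
    have hn : (Fintype.card (n j) : K) ≠ 0 := Nat.cast_ne_zero.mpr Fintype.card_ne_zero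
    have hΓ : (Fintype.card Γ : K) ≠ 0 := Nat.cast_ne_zero.mpr Fintype.card_ne_zero
    rw [sum_mul_mul_inv_eq_trace_smul (ρ j) (hirr j)]
    by_cases ha : a' = a <;> by_cases hb : b' = b <;> simp [one_apply, ha, hb, hn, hΓ, eq_comm]
  · rw [sum_mul_mul_inv_eq_zero _ _ (hinequiv j i hij)]
    simp [one_apply, Ne.symm hij]

theorem permMatrix_mulRight_mul_repCoeffMatrix [Fintype ι] [DecidableEq Γ] {R : Type*}
    [Semiring R] (ρ : ∀ j, Γ →* Matrix (n j) (n j) R) (h : Γ) :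
    (Equiv.mulRight h).permMatrix R * repCoeffMatrix ρ = repCoeffMatrix ρ * repBlockMatrix ρ h := by
  rw [PEquiv.toMatrix_toPEquiv_mul]
  ext g ⟨j, a, b⟩
  rw [mul_apply, Fintype.sum_sigma, Finset.sum_eq_single j]
  · simp [repCoeffMatrix, repBlockMatrix, blockDiagonal'_apply_eq, Fintype.sum_prod_type,
      one_apply, mul_apply]
  · intro j' _ hj'
    simp [repBlockMatrix, blockDiagonal'_apply_ne _ _ _ hj']
  · simp

end Coefficients

theorem covering_matrix_eq_sum_permMatrix_kronecker {R V Γ : Type*} [Semiring R] [Group Γ]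
    [Fintype Γ] [DecidableEq Γ] (A : V → V → Prop) [∀ u v, Decidable (A u v)] (w : V → V → R)
    (α : V → V → Γ) {Wh : Γ → Matrix V V R}
    (hWh : ∀ h u v, Wh h u v = if A u v ∧ α u v = h then w u v else 0)
    {Wcov : Matrix (V × Γ) (V × Γ) R}
    (hWcov : ∀ p q : V × Γ,
      Wcov p q = if A p.1 q.1 ∧ q.2 = p.2 * α p.1 q.1 then w p.1 q.1 else 0) :
    Wcov = (∑ h, (Equiv.mulRight h).permMatrix R ⊗ₖ Wh h).submatrix (Equiv.prodComm V Γ)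
      (Equiv.prodComm V Γ) := by
  ext ⟨u, g⟩ ⟨v, g'⟩
  by_cases hA : A u v
  · simp [hWcov, hWh, hA, Matrix.sum_apply, PEquiv.toMatrix_apply, eq_comm]
  · simp [hWcov, hWh, hA, Matrix.sum_apply]

/-- **Decomposition formula for the weighted matrix of a group covering** (Theorem 7).
`V` is the vertex set of a digraph with arc set `A`, `w` a weight function supported on
arcs, `α` a voltage assignment in a finite group `Γ`.  `Wh h` is the matrix of arcs with
voltage `h`, and the covering matrix on `V × Γ` has `((u,g),(v,k))`-entry `w u v` iff
`(u,v)` is an arc and `k = g * α u v`.  Given a complete system of pairwise inequivalent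
irreducible complex representations `ρ_j` of `Γ` of degrees `d_j`
(with `∑ d_j² = |Γ|`), the determinant of the covering matrix is
`∏_j det (∑_h ρ_j h ⊗ W_h) ^ d_j`. -/
theorem det_weighted_matrix_group_covering {Γ : Type} [Group Γ] [Fintype Γ] [DecidableEq Γ]
    {V : Type} [Fintype V] [DecidableEq V]
    (A : V → V → Prop) [∀ u v : V, Decidable (A u v)]
    (w : V → V → ℂ) (α : V → V → Γ)
    {k : ℕ} (d : Fin k → ℕ)
    (ρ : ∀ j : Fin k, Γ →* Matrix (Fin (d j)) (Fin (d j)) ℂ)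
    (hirr : ∀ j : Fin k, ∀ U : Submodule ℂ (Fin (d j) → ℂ),
      (∀ g : Γ, ∀ v ∈ U, (ρ j g).mulVec v ∈ U) → U = ⊥ ∨ U = ⊤)
    (hinequiv : ∀ i j : Fin k, i ≠ j →
      ∀ T : Matrix (Fin (d i)) (Fin (d j)) ℂ,
        (∀ g : Γ, ρ i g * T = T * ρ j g) → T = 0)
    (hcomplete : ∑ j : Fin k, (d j) ^ 2 = Fintype.card Γ)
    (Wh : Γ → Matrix V V ℂ)
    (hWh : ∀ h : Γ, ∀ u v : V,
      Wh h u v = if A u v ∧ α u v = h then w u v else 0)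
    (Wcov : Matrix (V × Γ) (V × Γ) ℂ)
    (hWcov : ∀ p q : V × Γ,
      Wcov p q = if A p.1 q.1 ∧ q.2 = p.2 * α p.1 q.1 then w p.1 q.1 else 0) :
    Wcov.det = ∏ j : Fin k, (∑ h : Γ, (ρ j h) ⊗ₖ (Wh h)).det ^ (d j) := by
  have e : Γ ≃ Σ j, Fin (d j) × Fin (d j) :=
    Fintype.equivOfCardEq (by simp [← hcomplete, sq])
  rw [covering_matrix_eq_sum_permMatrix_kronecker A w α hWh hWcov, det_submatrix_equiv_self,
    det_sum_kronecker_eq_of_mul_eq_mul e Wh (repCoeffMatrixInv_mul_repCoeffMatrix ρ hirr hinequiv)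
      (permMatrix_mulRight_mul_repCoeffMatrix ρ)]
  simp only [repBlockMatrix, det_sum_blockDiagonal'_kronecker, det_sum_one_kronecker_kronecker,
    Fintype.card_fin]
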